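/- arXiv:1410.2996 — 2 statements merged into one kernel-verified Lean document; each statement's English description precedes it below -/
import Mathlib

section
/- Let G be a nontrivial finitely cogenerated Hausdorff topological group. Then there is no n < ω such that G ∈ SSGP(n). -/
universe u v

/-- The classes SSGP(n) of Hausdorff topological groups: `SSGP 0 G` iff `G` is
trivial; `SSGP (n+1) G` iff for every neighborhood `U` of `1` there is a family
`𝓗` of subgroups of `G`, each contained in `U`, such that the closure `N` of the
subgroup generated by `⋃ 𝓗` is normal and `G ⧸ N` (with the quotient topology)
belongs to `SSGP n`. -/
def SSGP : ℕ → ∀ (G : Type u) [Group G] [TopologicalSpace G] [IsTopologicalGroup G], Prop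
  | 0, G, _, _, _ => Subsingleton G
  | n + 1, G, _, _, _ =>
      ∀ U ∈ nhds (1 : G), ∃ 𝓗 : Set (Subgroup G),
        (∀ H ∈ 𝓗, (H : Set G) ⊆ U) ∧
        ∃ hN : (Subgroup.closure (⋃ H ∈ 𝓗, (H : Set G))).topologicalClosure.Normal,
          haveI := hN
          SSGP n (G ⧸ (Subgroup.closure (⋃ H ∈ 𝓗, (H : Set G))).topologicalClosure)

/-- A group is finitely cogenerated if some finite set `C` with `1 ∉ C` meets
every subgroup with more than one element. -/
def FinitelyCogenerated (G : Type u) [Group G] : Prop :=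
  ∃ C : Finset G, (1 : G) ∉ (C : Set G) ∧
    ∀ H : Subgroup G, H ≠ ⊥ → ∃ c ∈ C, c ∈ H

/-!
A finite cogenerating set `C` is closed, so its complement is a neighbourhood of `1` that contains
no nontrivial subgroup. In the definition of `SSGP (n + 1)` every member of `𝓗` is therefore
trivial, hence so is the normal subgroup `N`; then `G ⧸ N ≃* G` is again nontrivial, T₁ and
finitely cogenerated, and induction on `n` ends at `SSGP 0`, which says that `G` is trivial.
-/

open Topology

section

variable {G : Type u} [Group G]

lemma FinitelyCogenerated.of_mulEquiv {G' : Type v} [Group G'] (e : G ≃* G')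
    (hG : FinitelyCogenerated G) : FinitelyCogenerated G' := by
  classical
  obtain ⟨C, hC1, hC⟩ := hG
  refine ⟨C.image e, by simpa using hC1, fun H hH => ?_⟩
  have hH' : H.comap (e : G →* G') ≠ ⊥ := by
    rwa [Subgroup.comap_equiv_eq_map_symm, Ne,
      Subgroup.map_eq_bot_iff_of_injective _ e.symm.injective]
  obtain ⟨c, hc, hcH⟩ := hC _ hH'
  exact ⟨e c, Finset.mem_image_of_mem e hc, hcH⟩

variable [TopologicalSpace G]

lemma FinitelyCogenerated.exists_mem_nhds_one_subgroup_eq_bot [T1Space G]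
    (hG : FinitelyCogenerated G) :
    ∃ U ∈ 𝓝 (1 : G), ∀ H : Subgroup G, (H : Set G) ⊆ U → H = ⊥ := by
  obtain ⟨C, hC1, hC⟩ := hG
  refine ⟨(C : Set G)ᶜ, C.finite_toSet.isClosed.isOpen_compl.mem_nhds hC1, fun H hHU => ?_⟩
  by_contra hH
  obtain ⟨c, hc, hcH⟩ := hC H hH
  exact hHU hcH hc

variable [IsTopologicalGroup G]

lemma Subgroup.topologicalClosure_bot_eq_bot [T1Space G] :
    (⊥ : Subgroup G).topologicalClosure = ⊥ := by
  rw [← SetLike.coe_set_eq, coe_topologicalClosure_bot, closure_singleton, coe_bot]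

lemma Subgroup.topologicalClosure_closure_biUnion_eq_bot [T1Space G] {𝓗 : Set (Subgroup G)}
    (h𝓗 : ∀ H ∈ 𝓗, H = ⊥) :
    (closure (⋃ H ∈ 𝓗, (H : Set G))).topologicalClosure = ⊥ := by
  have : closure (⋃ H ∈ 𝓗, (H : Set G)) = ⊥ := by
    rw [closure_eq_bot_iff, Set.iUnion₂_subset_iff]
    intro H hH
    simp [h𝓗 H hH]
  rw [this, topologicalClosure_bot_eq_bot]

theorem FinitelyCogenerated.not_ssgp [T1Space G] [Nontrivial G] (hG : FinitelyCogenerated G)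
    (n : ℕ) : ¬ SSGP n G := by
  induction n generalizing G with
  | zero => exact not_subsingleton G
  | succ n ih =>
    intro hS
    obtain ⟨U, hU, hU_bot⟩ := hG.exists_mem_nhds_one_subgroup_eq_bot
    obtain ⟨𝓗, h𝓗U, _, hq⟩ := hS U hU
    have hN_bot := Subgroup.topologicalClosure_closure_biUnion_eq_bot fun H hH =>
      hU_bot H (h𝓗U H hH)
    let e := (QuotientGroup.quotientMulEquivOfEq hN_bot).trans QuotientGroup.quotientBot
    have : Nontrivial (G ⧸ _) := e.toEquiv.nontrivial
    have : IsClosed (_ : Set G) := Subgroup.isClosed_topologicalClosure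
      (Subgroup.closure (⋃ H ∈ 𝓗, (H : Set G)))
    exact ih (hG.of_mulEquiv e.symm) hq

end

/-- A nontrivial finitely cogenerated Hausdorff topological group belongs to
`SSGP(n)` for no `n < ω`. -/
theorem not_ssgp_of_finitelyCogenerated (G : Type u) [Group G] [TopologicalSpace G]
    [IsTopologicalGroup G] [T2Space G] [Nontrivial G]
    (hG : FinitelyCogenerated G) :
    ¬ ∃ n : ℕ, SSGP n G :=
  fun ⟨n, hn⟩ => hG.not_ssgp n hn
end

section
/- Let G be a Hausdorff topological group and K a dense subgroup of G. If K (with the subspace topology) belongs to SSGP(n), then G belongs to SSGP(n). -/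
universe u v

/-!
Work with an arbitrary continuous homomorphism `f : K →* G` with dense range and induct on `n`.
Pushing forward along `f` a family `𝓗` that witnesses SSGP(n+1) of `K` for `f ⁻¹' U` gives a
family for `U`. The closure `N` of the subgroup it generates is also the closure of `f N_K`,
where `N_K` is the closed normal subgroup obtained in `K`; as `f N_K` is normalized by the dense
subgroup `f K`, `N` is normal. Then `f` descends to a continuous homomorphism
`K ⧸ N_K →* G ⧸ N` with dense range, and `G ⧸ N` is again T₁ because `N` is closed.
-/

open Set

section

variable {K G : Type*} [Group K] [Group G]

theorem Subgroup.closure_biUnion_map (f : K →* G) (𝓗 : Set (Subgroup K)) :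
    Subgroup.closure (⋃ H ∈ Subgroup.map f '' 𝓗, (H : Set G)) =
      (Subgroup.closure (⋃ H ∈ 𝓗, (H : Set K))).map f := by
  rw [MonoidHom.map_closure, Set.biUnion_image, Set.image_iUnion₂]
  rfl

variable [TopologicalSpace G]

theorem Subgroup.topologicalClosure_map_topologicalClosure [TopologicalSpace K]
    [IsTopologicalGroup K] [IsTopologicalGroup G] {f : K →* G} (hf : Continuous f)
    (L : Subgroup K) :
    (L.topologicalClosure.map f).topologicalClosure = (L.map f).topologicalClosure :=
  le_antisymm
    (Subgroup.topologicalClosure_minimal _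
      (by rintro _ ⟨x, hx, rfl⟩; exact map_mem_closure hf hx fun y hy ↦ ⟨y, hy, rfl⟩)
      (Subgroup.isClosed_topologicalClosure _))
    (Subgroup.topologicalClosure_mono (Subgroup.map_mono L.le_topologicalClosure))

theorem Subgroup.normal_topologicalClosure_map_of_denseRange [IsTopologicalGroup G]
    (M : Subgroup K) [hM : M.Normal] {f : K →* G} (hf : DenseRange f) :
    (M.map f).topologicalClosure.Normal where
  conj_mem x hx g := by
    have hconj : MapsTo (fun g ↦ g * x * g⁻¹) (range f) (M.map f).topologicalClosure := by
      rintro _ ⟨k, rfl⟩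
      refine map_mem_closure (f := fun y ↦ f k * y * (f k)⁻¹)
        (IsTopologicalGroup.continuous_conj (f k)) hx ?_
      rintro _ ⟨m, hm, rfl⟩
      exact ⟨k * m * k⁻¹, hM.conj_mem m hm k, by simp⟩
    exact closure_closure.subset (hconj.closure (by fun_prop) (hf g))

theorem QuotientGroup.continuous_map [TopologicalSpace K] (M : Subgroup K) [M.Normal]
    (N : Subgroup G) [N.Normal] {f : K →* G} (hf : Continuous f) (hMN : M ≤ N.comap f) :
    Continuous (QuotientGroup.map M N f hMN) :=
  (QuotientGroup.isQuotientMap_mk M).continuous_iff.2 (QuotientGroup.continuous_mk.comp hf)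

theorem QuotientGroup.denseRange_map (M : Subgroup K) [M.Normal] (N : Subgroup G) [N.Normal]
    {f : K →* G} (hf : DenseRange f) (hMN : M ≤ N.comap f) :
    DenseRange (QuotientGroup.map M N f hMN) := by
  have hcomp : DenseRange ((QuotientGroup.mk : G → G ⧸ N) ∘ f) :=
    QuotientGroup.mk_surjective.denseRange.comp hf QuotientGroup.continuous_mk
  exact hcomp.mono (by rintro _ ⟨k, rfl⟩; exact ⟨k, rfl⟩)

end

theorem SSGP.of_denseRange {n : ℕ} {K : Type u} {G : Type v} [Group K] [TopologicalSpace K]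
    [IsTopologicalGroup K] [Group G] [TopologicalSpace G] [IsTopologicalGroup G] [T1Space G]
    {f : K →* G} (hf : Continuous f) (hfd : DenseRange f) (hK : SSGP n K) : SSGP n G := by
  induction n generalizing K G with
  | zero =>
    have hrange : (range f).Subsingleton := by
      rintro _ ⟨a, rfl⟩ _ ⟨b, rfl⟩
      rw [(hK : Subsingleton K).elim a b]
    exact subsingleton_univ_iff.1 (hfd.closure_range ▸ hrange.closure)
  | succ n ih =>
    intro U hU
    obtain ⟨𝓗, h𝓗U, hNK, hq⟩ :=
      hK _ (hf.continuousAt.preimage_mem_nhds (by rwa [map_one]))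
    refine ⟨Subgroup.map f '' 𝓗, ?_, ?_⟩
    · rintro _ ⟨H, hH, rfl⟩ _ ⟨x, hx, rfl⟩
      exact h𝓗U H hH hx
    set NK := (Subgroup.closure (⋃ H ∈ 𝓗, (H : Set K))).topologicalClosure
    set S := ⋃ H ∈ Subgroup.map f '' 𝓗, (H : Set G)
    have hN : (Subgroup.closure S).topologicalClosure = (NK.map f).topologicalClosure := by
      rw [Subgroup.closure_biUnion_map, Subgroup.topologicalClosure_map_topologicalClosure hf]
    have hN_normal : (Subgroup.closure S).topologicalClosure.Normal :=
      hN ▸ NK.normal_topologicalClosure_map_of_denseRange hfd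
    refine ⟨hN_normal, ?_⟩
    have : IsClosed ((Subgroup.closure S).topologicalClosure : Set G) :=
      Subgroup.isClosed_topologicalClosure _
    have hle : NK ≤ (Subgroup.closure S).topologicalClosure.comap f := hN ▸
      (Subgroup.le_comap_map f NK).trans (Subgroup.comap_mono (Subgroup.le_topologicalClosure _))
    exact ih (QuotientGroup.continuous_map _ _ hf hle) (QuotientGroup.denseRange_map _ _ hfd hle) hq

/-- If a dense subgroup `K` of a Hausdorff topological group `G` belongs to
`SSGP(n)` in the subspace topology, then `G ∈ SSGP(n)`. -/
theorem ssgp_of_dense_subgroup (n : ℕ) (G : Type u) [Group G] [TopologicalSpace G]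
    [IsTopologicalGroup G] [T2Space G] (K : Subgroup G) (hdense : Dense (K : Set G))
    (hK : SSGP n K) : SSGP n G :=
  SSGP.of_denseRange (f := K.subtype) continuous_subtype_val hdense.denseRange_val hK
end
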